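/- Let I > 0, I₃ > 0, m ∈ ℝ, and let q = (φ, θ, ψ) : ℝ → ℝ³ be twice differentiable and satisfy the Euler–Lagrange equations of the Lagrange top Lagrangian L, i.e. for each coordinate γ ∈ {φ, θ, ψ} and every time t, d/dt [ (∂L/∂q̇^γ)(q(t), q̇(t)) ] = (∂L/∂q^γ)(q(t), q̇(t)). Then the nutation angle satisfies the second-order equation I θ̈ − ( I m + I φ̇² cos θ − I₃ (ψ̇ + φ̇ cos θ) φ̇ ) sin θ = 0 at every time t. -/

import Mathlib

/-!
The θ-component of the Euler–Lagrange equations is already the nutation equation: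
`∂L/∂θ̇ = I θ̇`, so its left-hand side is `I θ̈`, while `∂L/∂θ` is the bracket times `sin θ`.
Both partial derivatives are computed as one-variable derivatives along a coordinate line.
-/

open Real

/-- The Lagrange top Lagrangian in Euler angles q = (φ, θ, ψ) (indices 0, 1, 2). -/
noncomputable def lagrangeTopL (I I₃ m : ℝ) (q v : Fin 3 → ℝ) : ℝ :=
  (1 / 2) * I₃ * (v 2 + v 0 * cos (q 1)) ^ 2
    + (1 / 2) * I * ((v 0) ^ 2 * sin (q 1) ^ 2 + (v 1) ^ 2)
    - I * m * cos (q 1)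

open Function

theorem fderiv_apply_single_eq_deriv_update {𝕜 ι F : Type*} [NontriviallyNormedField 𝕜]
    [Fintype ι] [DecidableEq ι] [NormedAddCommGroup F] [NormedSpace 𝕜 F]
    {f : (ι → 𝕜) → F} {x : ι → 𝕜} (hf : DifferentiableAt 𝕜 f x) (i : ι) :
    fderiv 𝕜 f x (Pi.single i 1) = deriv (fun s => f (update x i s)) (x i) :=
  (hf.hasFDerivAt.comp_hasDerivAt_of_eq (x i) (hasDerivAt_update x i (x i))
    (update_eq_self i x).symm).deriv.symm

lemma differentiable_lagrangeTopL_velocity (I I₃ m : ℝ) (q : Fin 3 → ℝ) :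
    Differentiable ℝ (lagrangeTopL I I₃ m q) := by
  unfold lagrangeTopL
  fun_prop

lemma differentiable_lagrangeTopL_position (I I₃ m : ℝ) (v : Fin 3 → ℝ) :
    Differentiable ℝ (fun q => lagrangeTopL I I₃ m q v) := by
  unfold lagrangeTopL
  fun_prop

lemma hasDerivAt_lagrangeTopL_velocity_update_one (I I₃ m : ℝ) (q v : Fin 3 → ℝ) (s : ℝ) :
    HasDerivAt (fun r => lagrangeTopL I I₃ m q (update v 1 r)) (I * s) s := by
  simp only [lagrangeTopL, update_self, update_of_ne (by decide : (0 : Fin 3) ≠ 1),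
    update_of_ne (by decide : (2 : Fin 3) ≠ 1)]
  refine ((((hasDerivAt_id s).fun_pow 2).const_add (v 0 ^ 2 * sin (q 1) ^ 2)).const_mul
    ((1 / 2) * I)).const_add _ |>.sub_const _ |>.congr_deriv ?_
  simp only [Nat.cast_ofNat, id]
  ring

lemma fderiv_lagrangeTopL_velocity_single_one (I I₃ m : ℝ) (q v : Fin 3 → ℝ) :
    fderiv ℝ (lagrangeTopL I I₃ m q) v (Pi.single 1 1) = I * v 1 := by
  rw [fderiv_apply_single_eq_deriv_update (differentiable_lagrangeTopL_velocity I I₃ m q v),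
    (hasDerivAt_lagrangeTopL_velocity_update_one I I₃ m q v (v 1)).deriv]

lemma hasDerivAt_lagrangeTopL_position_update_one (I I₃ m : ℝ) (q v : Fin 3 → ℝ) (θ : ℝ) :
    HasDerivAt (fun s => lagrangeTopL I I₃ m (update q 1 s) v)
      ((I * m + I * v 0 ^ 2 * cos θ - I₃ * (v 2 + v 0 * cos θ) * v 0) * sin θ) θ := by
  simp only [lagrangeTopL, update_self]
  have hcos := hasDerivAt_cos θ
  have hsin := hasDerivAt_sin θ
  refine (((((hcos.const_mul (v 0)).const_add (v 2)).fun_pow 2).const_mul ((1 / 2) * I₃)).fun_add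
    ((((hsin.fun_pow 2).const_mul (v 0 ^ 2)).add_const (v 1 ^ 2)).const_mul ((1 / 2) * I))).fun_sub
    (hcos.const_mul (I * m)) |>.congr_deriv ?_
  simp only [Nat.cast_ofNat]
  ring

lemma fderiv_lagrangeTopL_position_single_one (I I₃ m : ℝ) (q v : Fin 3 → ℝ) :
    fderiv ℝ (fun x => lagrangeTopL I I₃ m x v) q (Pi.single 1 1)
      = (I * m + I * v 0 ^ 2 * cos (q 1) - I₃ * (v 2 + v 0 * cos (q 1)) * v 0) * sin (q 1) := by
  rw [fderiv_apply_single_eq_deriv_update (differentiable_lagrangeTopL_position I I₃ m v q),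
    (hasDerivAt_lagrangeTopL_position_update_one I I₃ m q v (q 1)).deriv]

theorem lagrange_top_nutation_equation_general
    (I I₃ m : ℝ)
    (Q : ℝ → Fin 3 → ℝ)
    (hEL : ∀ (γ : Fin 3) (t : ℝ),
      deriv (fun s => fderiv ℝ (fun v => lagrangeTopL I I₃ m (Q s) v) (deriv Q s)
          (Pi.single γ 1)) t
        = fderiv ℝ (fun x => lagrangeTopL I I₃ m x (deriv Q t)) (Q t) (Pi.single γ 1)) :
    ∀ t : ℝ,
      I * deriv (fun s => deriv Q s 1) t
        - (I * m + I * (deriv Q t 0) ^ 2 * cos (Q t 1)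
            - I₃ * (deriv Q t 2 + deriv Q t 0 * cos (Q t 1)) * deriv Q t 0)
          * sin (Q t 1) = 0 := by
  intro t
  have hθ := hEL 1 t
  simp only [fderiv_lagrangeTopL_velocity_single_one, fderiv_lagrangeTopL_position_single_one,
    deriv_const_mul_field'] at hθ
  exact sub_eq_zero.mpr hθ

theorem lagrange_top_nutation_equation
    (I I₃ m : ℝ) (hI : 0 < I) (hI₃ : 0 < I₃)
    (Q : ℝ → Fin 3 → ℝ)
    (hQ : Differentiable ℝ Q) (hQ' : Differentiable ℝ (deriv Q))
    (hEL : ∀ (γ : Fin 3) (t : ℝ),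
      deriv (fun s => fderiv ℝ (fun v => lagrangeTopL I I₃ m (Q s) v) (deriv Q s)
          (Pi.single γ 1)) t
        = fderiv ℝ (fun x => lagrangeTopL I I₃ m x (deriv Q t)) (Q t) (Pi.single γ 1)) :
    ∀ t : ℝ,
      I * deriv (fun s => deriv Q s 1) t
        - (I * m + I * (deriv Q t 0) ^ 2 * cos (Q t 1)
            - I₃ * (deriv Q t 2 + deriv Q t 0 * cos (Q t 1)) * deriv Q t 0)
          * sin (Q t 1) = 0 :=
  lagrange_top_nutation_equation_general I I₃ m Q hEL
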